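/- In a one-player sequential game consisting of a root node with edges to leaves labelled by all outcomes of a cycle x₀ ≺ x₁ ≺ ... ≺ x_{k-1} ≺ x₀ in the player's preference relation, the Subgame-Improvement dynamics does not terminate: there is an infinite sequence of strategy profiles s⁰, s¹, s², ... with sᵏ ⇀_{SI} s^{k+1} for all k. -/

import Mathlib

/-!
The player walks around the cycle: profile `n` picks leaf `n % k` at the root. The root is the
only internal node, so the only change between consecutive profiles happens there, and it moves
the outcome from `x (n % k)` to the strictly preferred `x ((n + 1) % k)`.
-/

namespace SeqGame

inductive GameTree (N O : Type) : Type where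
  | leaf (o : O) : GameTree N O
  | node (i : N) (children : List (GameTree N O)) : GameTree N O

namespace GameTree

variable {N O : Type}

/-- The subtree of `T` at position `p` (a list of child indices), if it exists. -/
def subtree : GameTree N O → List ℕ → Option (GameTree N O)
  | t, [] => some t
  | leaf _, _ :: _ => none
  | node _ c, k :: p =>
    match getElem? c k with
    | some t => subtree t p
    | none => none

/-- A strategy profile: a choice of a child index at every position. -/
abbrev Profile := List ℕ → ℕ

/-- A profile is legal if it chooses an existing child at every internal node. -/
def Legal (T : GameTree N O) (s : Profile) : Prop :=
  ∀ p i c, T.subtree p = some (node i c) → s p < c.length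

/-- The profiles `s` and `s'` differ at the (valid, internal) node `p`. -/
def Differs (T : GameTree N O) (s s' : Profile) (p : List ℕ) : Prop :=
  (∃ i c, T.subtree p = some (node i c)) ∧ s p ≠ s' p

/-- The outcome reached when playing according to the profile `s`. -/
def outcome : GameTree N O → Profile → Option O
  | leaf o, _ => some o
  | node _ c, s =>
    match h : getElem? c (s []) with
    | some t => outcome t (fun p => s (s [] :: p))
    | none => none
decreasing_by
  have hm : t ∈ c := by
    exact List.mem_of_getElem? h
  have := List.sizeOf_lt_of_mem hm
  simp only [node.sizeOf_spec]
  omega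

/-- The profile `s` re-rooted at position `p`. -/
def shift (s : Profile) (p : List ℕ) : Profile := fun q => s (p ++ q)

/-- The owner of the node at position `p`, if it is internal. -/
def ownerAt (T : GameTree N O) (p : List ℕ) : Option N :=
  match T.subtree p with
  | some (node i _) => some i
  | _ => none

/-- `p` lies along the play induced by `s`. -/
def OnPlay (s : Profile) (p : List ℕ) : Prop :=
  ∀ q k, (q ++ [k]) <+: p → s q = k

/-- Improvement property: every player who changes strictly improves the outcome. -/
def Iprop (T : GameTree N O) (pref : N → O → O → Prop) (s s' : Profile) : Prop :=
  ∀ p i c, T.subtree p = some (node i c) → s p ≠ s' p →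
    ∃ x y, T.outcome s = some x ∧ T.outcome s' = some y ∧ pref i x y

/-- Subgame improvement property. -/
def SIprop (T : GameTree N O) (pref : N → O → O → Prop) (s s' : Profile) : Prop :=
  ∀ p i c, T.subtree p = some (node i c) → s p ≠ s' p →
    ∃ x y, outcome (node i c) (shift s p) = some x ∧
      outcome (node i c) (shift s' p) = some y ∧ pref i x y

/-- Laziness property: all changed nodes lie along the play induced by `s'`. -/
def Lprop (T : GameTree N O) (s s' : Profile) : Prop :=
  ∀ p, Differs T s s' p → OnPlay s' p

/-- One player property: at most one player changes his strategy. -/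
def P1prop (T : GameTree N O) (s s' : Profile) : Prop :=
  ∃ i : N, ∀ p, Differs T s s' p → T.ownerAt p = some i

/-- Atomicity property: at most one node changes. -/
def Aprop (T : GameTree N O) (s s' : Profile) : Prop :=
  ∀ p q, Differs T s s' p → Differs T s s' q → p = q

/-- Names of the update properties. -/
inductive Upd : Type | I | SI | L | P1 | A
deriving DecidableEq

/-- Interpretation of an update property name. -/
def holds (T : GameTree N O) (pref : N → O → O → Prop) : Upd → Profile → Profile → Prop
  | .I => Iprop T pref
  | .SI => SIprop T pref
  | .L => Lprop T
  | .P1 => P1prop T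
  | .A => Aprop T

/-- The X-dynamics: an actual update (between legal profiles) satisfying
all properties in `X`. -/
def XDyn (X : Set Upd) (T : GameTree N O) (pref : N → O → O → Prop)
    (s s' : Profile) : Prop :=
  Legal T s ∧ Legal T s' ∧ (∃ p, Differs T s s' p) ∧ ∀ u ∈ X, holds T pref u s s'

/-- A dynamics terminates iff there is no infinite update sequence. -/
def Terminates (D : Profile → Profile → Prop) : Prop :=
  ¬ ∃ f : ℕ → Profile, ∀ n, D (f n) (f (n + 1))

/-- `s'` is a deviation from `s` by the coalition `I`. -/
def Deviation (T : GameTree N O) (I : Set N) (s s' : Profile) : Prop :=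
  Legal T s' ∧ ∀ p i c, T.subtree p = some (node i c) → i ∉ I → s p = s' p

/-- Nash equilibrium. -/
def IsNE (T : GameTree N O) (pref : N → O → O → Prop) (s : Profile) : Prop :=
  ∀ i s', Deviation T {i} s s' →
    ∀ x y, T.outcome s = some x → T.outcome s' = some y → ¬ pref i x y

/-- Subgame perfect equilibrium: an NE in every subgame. -/
def IsSPE (T : GameTree N O) (pref : N → O → O → Prop) (s : Profile) : Prop :=
  ∀ p t, T.subtree p = some t → IsNE t pref (shift s p)

/-- Strong Nash equilibrium (Aumann). -/
def IsSNE (T : GameTree N O) (pref : N → O → O → Prop) (s : Profile) : Prop :=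
  ∀ I : Set N, I.Nonempty → ∀ s', Deviation T I s s' →
    ∃ i ∈ I, ∀ x y, T.outcome s = some x → T.outcome s' = some y → ¬ pref i x y

/-- A relation is acyclic if it has no cycle. -/
def Acyclic (r : O → O → Prop) : Prop := ∀ x, ¬ Relation.TransGen r x x

/-- Incomparability. -/
def Incomp (r : O → O → Prop) (x y : O) : Prop := ¬ r x y ∧ ¬ r y x

/-- Strict weak order: irreflexive, transitive, with transitive incomparability. -/
def IsSWO (r : O → O → Prop) : Prop :=
  (∀ x, ¬ r x x) ∧ (∀ x y z, r x y → r y z → r x z) ∧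
    (∀ x y z, Incomp r x y → Incomp r y z → Incomp r x z)

/-- Strict linear order: irreflexive, transitive and total. -/
def IsSLO (r : O → O → Prop) : Prop :=
  (∀ x, ¬ r x x) ∧ (∀ x y z, r x y → r y z → r x z) ∧
    (∀ x y, x ≠ y → r x y ∨ r y x)

/-- Absence of the main pattern. -/
def OutOfMainPattern (pref : N → O → O → Prop) : Prop :=
  ∀ (i j : N) (x y z : O),
    ¬ (pref i x y ∧ pref i y z ∧ pref j y z ∧ pref j z x)

/-- Absence of the secondary pattern. -/
def OutOfSecondaryPattern (pref : N → O → O → Prop) : Prop :=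
  ∀ (i j : N) (w x y z : O),
    ¬ (pref i w x ∧ pref i x y ∧ pref i y z ∧
       Incomp (pref j) x z ∧ pref j z w ∧ Incomp (pref j) w y)

/-- Absence of both patterns. -/
def OutOfPattern (pref : N → O → O → Prop) : Prop :=
  OutOfMainPattern pref ∧ OutOfSecondaryPattern pref

/-- The preferences can be layered: there is an ordered partition of the
outcomes (given by a layer-index function) such that higher layers are
unanimously weakly preferred, and within a layer no two players agree on
one pair while disagreeing on another pair. -/
def CanBeLayered (pref : N → O → O → Prop) : Prop :=
  ∃ ℓ : O → ℕ,
    (∀ x y, ℓ x < ℓ y → ∀ i, ¬ pref i y x) ∧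
    (∀ (i j : N) (w x y z : O), ℓ w = ℓ x → ℓ x = ℓ y → ℓ y = ℓ z →
      ¬ (pref i x y ∧ pref j x y ∧ pref i w z ∧ pref j z w))

end GameTree
end SeqGame

namespace SeqGame.GameTree

variable {N O : Type} {i : N} {os : List O}

theorem subtree_node_map_leaf {p : List ℕ} {j : N} {c : List (GameTree N O)}
    (h : (node i (os.map leaf)).subtree p = some (node j c)) :
    p = [] ∧ j = i ∧ c = os.map leaf := by
  cases p with
  | nil => simp_all [subtree]
  | cons a q => cases ha : os[a]? <;> cases q <;> simp [subtree, ha] at h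

theorem outcome_node_map_leaf (s : Profile) :
    (node i (os.map leaf)).outcome s = os[s []]? := by
  rw [outcome]
  split <;> rename_i h <;>
    simp only [List.getElem?_map, Option.map_eq_some_iff, Option.map_eq_none_iff] at h
  · obtain ⟨o, ho, rfl⟩ := h
    rw [ho, outcome]
  · rw [h]

theorem legal_node_map_leaf {s : Profile} (hs : s [] < os.length) :
    Legal (node i (os.map leaf)) s := by
  intro p j c h
  obtain ⟨rfl, -, rfl⟩ := subtree_node_map_leaf h
  simpa using hs

theorem xDyn_SI_node_map_leaf (pref : N → O → O → Prop) {s s' : Profile}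
    (hs : s [] < os.length) (hs' : s' [] < os.length) (hne : s [] ≠ s' [])
    (hpref : pref i os[s []] os[s' []]) :
    XDyn {Upd.SI} (node i (os.map leaf)) pref s s' := by
  refine ⟨legal_node_map_leaf hs, legal_node_map_leaf hs', ⟨[], ⟨i, _, rfl⟩, hne⟩, ?_⟩
  rintro u rfl p j c h -
  obtain ⟨rfl, rfl, rfl⟩ := subtree_node_map_leaf h
  refine ⟨os[s []], os[s' []], ?_, ?_, hpref⟩ <;>
    simp [outcome_node_map_leaf, shift, hs, hs']

end SeqGame.GameTree

theorem Nat.mod_ne_add_one_mod {k : ℕ} (hk : 2 ≤ k) (n : ℕ) : n % k ≠ (n + 1) % k := by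
  have := Nat.mod_lt n (by omega : 0 < k)
  rw [Nat.add_mod, Nat.mod_eq_of_lt (by omega : 1 < k)]
  rcases Nat.lt_or_ge (n % k + 1) k with h | h
  · rw [Nat.mod_eq_of_lt h]; omega
  · rw [show n % k + 1 = k by omega, Nat.mod_self]; omega

open SeqGame GameTree in
/-- On a one-player game whose root gives access to every outcome of a preference
cycle `x 0 ≺ x 1 ≺ ⋯ ≺ x (k-1) ≺ x 0`, the SI-dynamics does not terminate. -/
theorem stmt_1 {O : Type} (k : ℕ) (hk : 2 ≤ k) (x : ℕ → O) (pref : O → O → Prop)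
    (hcyc : ∀ n, n < k → pref (x n) (x ((n + 1) % k))) :
    ∃ f : ℕ → Profile, ∀ n,
      XDyn {Upd.SI}
        (GameTree.node () ((List.range k).map fun n => GameTree.leaf (x n)))
        (fun _ : Unit => pref) (f n) (f (n + 1)) := by
  have hk0 : 0 < k := by omega
  have hlt (n : ℕ) : n % k < ((List.range k).map x).length := by simpa using Nat.mod_lt n hk0
  have htree : (List.range k).map (fun n => (leaf (x n) : GameTree Unit O)) =
      ((List.range k).map x).map leaf := by
    simp
  refine ⟨fun n _ => n % k, fun n => ?_⟩
  rw [htree]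
  refine xDyn_SI_node_map_leaf _ (hlt n) (hlt (n + 1)) (Nat.mod_ne_add_one_mod hk n) ?_
  simpa using hcyc (n % k) (Nat.mod_lt n hk0)
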